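/- Let B = (b₁,b₂,b₃) ∈ ℝ³ with b = |B|. Then B̂³ = −b² B̂. Moreover, let φ(ζ) = Σ_{n≥0} cₙ ζⁿ be an entire function with real coefficients cₙ, and write φ(iy) = φ(0) + iy φ₁(y) − y² φ₂(y) with φ₁(y) = Σ_{j≥0} c_{2j+1}(−y²)^j and φ₂(y) = Σ_{j≥0} c_{2j+2}(−y²)^j. Then the matrix function defined by the power series satisfies the Rodriguez-type formula φ(B̂) = φ(0) I + φ₁(b) B̂ + φ₂(b) B̂². -/

import Mathlib

noncomputable section

attribute [local instance] Matrix.normedAddCommGroup Matrix.normedSpace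

/-- The skew-symmetric matrix `B̂` associated with `B ∈ ℝ³`, so that `B̂ v = B × v`. -/
def hat (B : Fin 3 → ℝ) : Matrix (Fin 3) (Fin 3) ℝ :=
  !![0, -B 2, B 1; B 2, 0, -B 0; -B 1, B 0, 0]

/-- The Euclidean norm of a vector in `ℝ³`. -/
def enorm3 (B : Fin 3 → ℝ) : ℝ := Real.sqrt (B 0 ^ 2 + B 1 ^ 2 + B 2 ^ 2)

/-!
Once `A³ = s • A`, every power `A^(2j+1)` is `s^j • A` and every power `A^(2j+2)` is
`s^j • A²`, so the series `Σ cₙ Aⁿ` splits into its constant term and two scalar series times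
`A` and `A²`. For `A = B̂` one has `s = -|B|²`, and the two scalar series converge because the
coefficients are those of an entire function.
-/

section PowThree

variable {𝕜 R : Type*} [CommSemiring 𝕜] [Semiring R] [Algebra 𝕜 R] {A : R} {s : 𝕜}

theorem pow_two_mul_add_one_of_pow_three_eq_smul (hA : A ^ 3 = s • A) (j : ℕ) :
    A ^ (2 * j + 1) = s ^ j • A := by
  induction j with
  | zero => simp
  | succ j ih =>
    rw [show 2 * (j + 1) + 1 = 2 * j + 1 + 2 by ring, pow_add, ih, smul_mul_assoc, ← pow_succ',
      hA, smul_smul, pow_succ]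

theorem pow_two_mul_add_two_of_pow_three_eq_smul (hA : A ^ 3 = s • A) (j : ℕ) :
    A ^ (2 * j + 2) = s ^ j • A ^ 2 := by
  rw [pow_succ, pow_two_mul_add_one_of_pow_three_eq_smul hA, smul_mul_assoc, ← pow_two]

variable [TopologicalSpace R] [ContinuousAdd R] [TopologicalSpace 𝕜] [ContinuousSMul 𝕜 R]

theorem hasSum_smul_pow_of_pow_three_eq_smul (hA : A ^ 3 = s • A) {c : ℕ → 𝕜} {a₁ a₂ : 𝕜}
    (h₁ : HasSum (fun j => c (2 * j + 1) * s ^ j) a₁)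
    (h₂ : HasSum (fun j => c (2 * j + 2) * s ^ j) a₂) :
    HasSum (fun n => c n • A ^ n) (c 0 • 1 + a₁ • A + a₂ • A ^ 2) := by
  have hodd : HasSum (fun j => c (2 * j + 1) • A ^ (2 * j + 1)) (a₁ • A) := by
    simpa only [pow_two_mul_add_one_of_pow_three_eq_smul hA, smul_smul] using h₁.smul_const A
  have heven : HasSum (fun j => c (2 * j + 2) • A ^ (2 * j + 2)) (a₂ • A ^ 2) := by
    simpa only [pow_two_mul_add_two_of_pow_three_eq_smul hA, smul_smul] using h₂.smul_const (A ^ 2)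
  rw [add_right_comm]
  refine HasSum.even_add_odd ?_ hodd
  simpa only [mul_zero, pow_zero] using HasSum.zero_add (f := fun k => c (2 * k) • A ^ (2 * k)) heven

end PowThree

theorem summable_coeff_mul_pow_of_forall_summable {c : ℕ → ℝ}
    (hc : ∀ r : ℝ, 0 ≤ r → Summable fun n => |c n| * r ^ n) (m : ℕ) (x : ℝ) :
    Summable fun j => c (2 * j + m) * x ^ j := by
  have hr : 1 ≤ |x| + 1 := by linarith [abs_nonneg x]
  have hsub : Summable fun j => |c (2 * j + m)| * (|x| + 1) ^ (2 * j + m) :=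
    (hc _ (by positivity)).comp_injective fun a b h => by omega
  refine Summable.of_norm (hsub.of_nonneg_of_le (fun j => by positivity) fun j => ?_)
  rw [norm_mul, norm_pow, Real.norm_eq_abs, Real.norm_eq_abs]
  gcongr
  calc |x| ^ j ≤ (|x| + 1) ^ j := by gcongr; linarith
    _ ≤ (|x| + 1) ^ (2 * j + m) := pow_le_pow_right₀ hr (by omega)

theorem enorm3_sq (B : Fin 3 → ℝ) : enorm3 B ^ 2 = B 0 ^ 2 + B 1 ^ 2 + B 2 ^ 2 :=
  Real.sq_sqrt (by positivity)

theorem hat_pow_three (B : Fin 3 → ℝ) : hat B ^ 3 = -(enorm3 B ^ 2) • hat B := by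
  rw [enorm3_sq, pow_succ, pow_two]
  ext i j
  fin_cases i <;> fin_cases j <;>
    simp [hat, Matrix.mul_apply, Fin.sum_univ_three] <;> ring

/-- For `B ∈ ℝ³` with `b = |B|`, one has `B̂³ = −b² B̂`; and for an entire
function `φ(ζ) = Σ cₙ ζⁿ` with real coefficients, writing
`φ(iy) = φ(0) + iy φ₁(y) − y² φ₂(y)` with `φ₁(y) = Σ_j c_{2j+1}(−y²)^j` and
`φ₂(y) = Σ_j c_{2j+2}(−y²)^j`, the matrix function defined by the power series satisfies the
Rodriguez-type formula `φ(B̂) = φ(0) I + φ₁(b) B̂ + φ₂(b) B̂²`. -/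
theorem stmt7 (B : Fin 3 → ℝ) (c : ℕ → ℝ)
    (hc : ∀ r : ℝ, 0 ≤ r → Summable fun n => |c n| * r ^ n) :
    hat B ^ 3 = -(enorm3 B ^ 2) • hat B ∧
    (∑' n : ℕ, c n • hat B ^ n) =
      c 0 • (1 : Matrix (Fin 3) (Fin 3) ℝ)
        + (∑' j : ℕ, c (2 * j + 1) * (-(enorm3 B ^ 2)) ^ j) • hat B
        + (∑' j : ℕ, c (2 * j + 2) * (-(enorm3 B ^ 2)) ^ j) • hat B ^ 2 := by
  refine ⟨hat_pow_three B, ?_⟩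
  exact (hasSum_smul_pow_of_pow_three_eq_smul (hat_pow_three B)
    (summable_coeff_mul_pow_of_forall_summable hc 1 _).hasSum
    (summable_coeff_mul_pow_of_forall_summable hc 2 _).hasSum).tsum_eq
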